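/- Let u, w be two distinct non-adjacent vertices, each having at most Δ neighbors, in a graph where every vertex independently picks a uniformly random color from a fixed set C of q colors, and a vertex retains its color iff no neighbor picked the same color. Then the probability that u and w pick the same color and both retain it, and moreover no other neighbor of a fixed third vertex v (with u, w ∈ N(v), |N(v)| ≤ Δ) picks that color, is at least (1/q)·((q−1)/q)^{3Δ}. -/

import Mathlib

/-!
For each colour `c`, the colourings giving `u` and `w` the colour `c` and avoiding `c` on
`T = (N(u) ∪ N(w) ∪ N(v)) \ {u, w}` form a box of probability at least `q⁻² ((q - 1)/q)^|T|`.
These boxes are disjoint for distinct `c` and all lie in the event (as `u ≁ w`, every neighbour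
of `u` or `w` other than `u`, `w` lies in `T`), so the event has probability at least
`q⁻¹ ((q - 1)/q)^|T|`, and `|T| ≤ 3Δ`.
-/
open Finset
open scoped ENNReal

section UniformColoring

variable {V α : Type*} [Fintype V] [DecidableEq V] [Fintype α]

theorem PMF.uniformOfFintype_toOuterMeasure_piFinset [Nonempty α] (s : V → Finset α) :
    (PMF.uniformOfFintype (V → α)).toOuterMeasure (Fintype.piFinset s) =
      ∏ x, ((s x).card : ℝ≥0∞) / Fintype.card α := by
  simp only [PMF.toOuterMeasure_apply_finset, PMF.uniformOfFintype_apply, sum_const,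
    nsmul_eq_mul, Fintype.card_piFinset, Fintype.card_fun, div_eq_mul_inv, prod_mul_distrib,
    prod_const, card_univ, Nat.cast_prod, Nat.cast_pow, ENNReal.inv_pow]

variable [DecidableEq α]

def avoidBox (S T : Finset V) (c : α) : V → Finset α :=
  fun x => if x ∈ S then {c} else if x ∈ T then {c}ᶜ else univ

theorem mem_piFinset_avoidBox {S T : Finset V} (hST : Disjoint S T) (c : α) (f : V → α) :
    f ∈ Fintype.piFinset (avoidBox S T c) ↔ (∀ x ∈ S, f x = c) ∧ ∀ x ∈ T, f x ≠ c := by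
  simp only [Fintype.mem_piFinset, avoidBox]
  constructor
  · intro h
    refine ⟨fun x hx => by simpa [hx] using h x, fun x hx => ?_⟩
    simpa [hx, disjoint_right.1 hST hx] using h x
  · rintro ⟨hS, hT⟩ x
    split_ifs with hxS hxT
    · simpa using hS x hxS
    · simpa using hT x hxT
    · exact mem_univ _

theorem prod_card_avoidBox_div [Nonempty α] {S T : Finset V} (hST : Disjoint S T) (c : α) :
    ∏ x, ((avoidBox S T c x).card : ℝ≥0∞) / Fintype.card α =
      (Fintype.card α : ℝ≥0∞)⁻¹ ^ #S * ((Fintype.card α - 1 : ℕ) / Fintype.card α) ^ #T := by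
  have hq : (Fintype.card α : ℝ≥0∞) ≠ 0 := by simp
  rw [← prod_subset (subset_univ (S ∪ T)) fun x _ hx => ?_, prod_union hST]
  · congr 1
    · rw [prod_congr rfl fun x hx => ?_, prod_const]
      simp [avoidBox, hx]
    · rw [prod_congr rfl fun x hx => ?_, prod_const]
      simp [avoidBox, hx, disjoint_right.1 hST hx, card_compl]
  · simp only [mem_union, not_or] at hx
    simp [avoidBox, hx.1, hx.2, ENNReal.div_self hq]

theorem PMF.uniformOfFintype_toOuterMeasure_monochromatic_avoiding [Nonempty α] {S T : Finset V}
    (hS : S.Nonempty) (hST : Disjoint S T) :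
    (PMF.uniformOfFintype (V → α)).toOuterMeasure
        {f | ∃ c, (∀ x ∈ S, f x = c) ∧ ∀ x ∈ T, f x ≠ c} =
      Fintype.card α * (Fintype.card α : ℝ≥0∞)⁻¹ ^ #S *
        ((Fintype.card α - 1 : ℕ) / Fintype.card α) ^ #T := by
  have hdisj : ((univ : Finset α) : Set α).PairwiseDisjoint
      fun c => Fintype.piFinset (avoidBox S T c) := by
    intro c _ c' _ hcc'
    refine disjoint_left.2 fun f hf hf' => hcc' ?_
    obtain ⟨x, hx⟩ := hS
    rw [← ((mem_piFinset_avoidBox hST c f).1 hf).1 x hx,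
      ← ((mem_piFinset_avoidBox hST c' f).1 hf').1 x hx]
  have hset : {f : V → α | ∃ c, (∀ x ∈ S, f x = c) ∧ ∀ x ∈ T, f x ≠ c} =
      ↑(univ.biUnion fun c : α => Fintype.piFinset (avoidBox S T c)) := by
    ext f
    simp only [coe_biUnion, coe_univ, Set.mem_univ, Set.iUnion_true, Set.mem_iUnion, mem_coe,
      mem_piFinset_avoidBox hST]
    rfl
  rw [hset, PMF.toOuterMeasure_apply_finset, sum_biUnion hdisj]
  simp only [← PMF.toOuterMeasure_apply_finset, PMF.uniformOfFintype_toOuterMeasure_piFinset,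
    prod_card_avoidBox_div hST, sum_const, card_univ, nsmul_eq_mul, mul_assoc]

end UniformColoring

theorem ofReal_inv_mul_sub_one_div_pow_le {q : ℕ} [NeZero q] {s t k : ℕ} (hs : s ≤ 2)
    (ht : t ≤ k) :
    ENNReal.ofReal ((1 / (q : ℝ)) * (((q : ℝ) - 1) / q) ^ k) ≤
      q * (q : ℝ≥0∞)⁻¹ ^ s * ((q - 1 : ℕ) / q) ^ t := by
  have hq : 0 < q := Nat.pos_of_ne_zero (NeZero.ne q)
  have hqR : (0 : ℝ) < q := by exact_mod_cast hq
  have hq0 : (q : ℝ≥0∞) ≠ 0 := by simp [NeZero.ne q]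
  have hbase : ((q - 1 : ℕ) / q : ℝ≥0∞) ≤ 1 := by
    rw [ENNReal.div_le_iff hq0 (by simp), one_mul]
    exact_mod_cast Nat.sub_le q 1
  calc ENNReal.ofReal ((1 / (q : ℝ)) * (((q : ℝ) - 1) / q) ^ k)
      = q * (q : ℝ≥0∞)⁻¹ ^ 2 * ((q - 1 : ℕ) / q) ^ k := by
        rw [← Nat.cast_pred hq, ENNReal.ofReal_mul (by positivity),
          ENNReal.ofReal_pow (by positivity), ENNReal.ofReal_div_of_pos hqR,
          ENNReal.ofReal_div_of_pos hqR, ENNReal.ofReal_natCast, ENNReal.ofReal_natCast,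
          ENNReal.ofReal_one, one_div, sq, ← mul_assoc,
          ENNReal.mul_inv_cancel hq0 (by simp), one_mul]
    _ ≤ q * (q : ℝ≥0∞)⁻¹ ^ s * ((q - 1 : ℕ) / q) ^ t := by
        gcongr _ * ?_ * ?_
        · exact pow_le_pow_right_of_le_one' (ENNReal.inv_le_one.2 (by exact_mod_cast hq)) hs
        · exact pow_le_pow_right_of_le_one' hbase ht

theorem SimpleGraph.card_neighborFinset_union_le {V : Type*} [Fintype V] [DecidableEq V]
    (G : SimpleGraph V) [DecidableRel G.Adj] {Δ : ℕ} {u w v : V}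
    (hdu : G.degree u ≤ Δ) (hdw : G.degree w ≤ Δ) (hdv : G.degree v ≤ Δ) :
    #(G.neighborFinset u ∪ G.neighborFinset w ∪ G.neighborFinset v) ≤ 3 * Δ := by
  grw [card_union_le, card_union_le]
  simp only [SimpleGraph.card_neighborFinset_eq_degree]
  omega

theorem SimpleGraph.retains_of_forall_ne {V α : Type*} [Fintype V] [DecidableEq V]
    (G : SimpleGraph V) [DecidableRel G.Adj] {u w v : V} (hnadj : ¬G.Adj u w)
    {f : V → α} (huw : f u = f w)
    (hT : ∀ x ∈ (G.neighborFinset u ∪ G.neighborFinset w ∪ G.neighborFinset v) \ {u, w},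
      f x ≠ f u) :
    f u = f w ∧ (∀ x ∈ G.neighborFinset u, f x ≠ f u) ∧ (∀ x ∈ G.neighborFinset w, f x ≠ f w) ∧
      (∀ x ∈ G.neighborFinset v, x ≠ u → x ≠ w → f x ≠ f u) := by
  have hmem : ∀ x, x ≠ u → x ≠ w →
      (G.Adj u x ∨ G.Adj w x ∨ G.Adj v x) → f x ≠ f u := fun x hxu hxw hx =>
    hT x (by simpa [hxu, hxw, or_assoc] using hx)
  refine ⟨huw, fun x hx => ?_, fun x hx => ?_, fun x hx hxu hxw => ?_⟩
  · rw [SimpleGraph.mem_neighborFinset] at hx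
    exact hmem x hx.ne' (by rintro rfl; exact hnadj hx) (.inl hx)
  · rw [SimpleGraph.mem_neighborFinset] at hx
    rw [← huw]
    exact hmem x (by rintro rfl; exact hnadj hx.symm) hx.ne' (.inr (.inl hx))
  · exact hmem x hxu hxw (.inr (.inr ((G.mem_neighborFinset v x).1 hx)))

open scoped Classical

theorem stmt5_general {V : Type*} [Fintype V] [DecidableEq V] (G : SimpleGraph V)
    [DecidableRel G.Adj] (Δ q : ℕ) [NeZero q] (u w v : V)
    (hnadj : ¬ G.Adj u w)
    (hdu : G.degree u ≤ Δ) (hdw : G.degree w ≤ Δ) (hdv : G.degree v ≤ Δ) :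
    ENNReal.ofReal ((1 / (q : ℝ)) * (((q : ℝ) - 1) / q) ^ (3 * Δ)) ≤
      (PMF.uniformOfFintype (V → Fin q)).toOuterMeasure
        {f : V → Fin q | f u = f w ∧
          (∀ x ∈ G.neighborFinset u, f x ≠ f u) ∧
          (∀ x ∈ G.neighborFinset w, f x ≠ f w) ∧
          (∀ x ∈ G.neighborFinset v, x ≠ u → x ≠ w → f x ≠ f u)} := by
  set T := (G.neighborFinset u ∪ G.neighborFinset w ∪ G.neighborFinset v) \ {u, w}
  have hT : #T ≤ 3 * Δ :=
    (card_le_card sdiff_subset).trans (G.card_neighborFinset_union_le hdu hdw hdv)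
  have hprob := PMF.uniformOfFintype_toOuterMeasure_monochromatic_avoiding (α := Fin q) (T := T)
    (insert_nonempty u {w}) disjoint_sdiff
  rw [Fintype.card_fin] at hprob
  calc _ ≤ _ := ofReal_inv_mul_sub_one_div_pow_le card_le_two hT
    _ = _ := hprob.symm
    _ ≤ _ := by
      refine MeasureTheory.measure_mono ?_
      rintro f ⟨c, hc, hTc⟩
      have hfu : f u = c := hc u (mem_insert_self u {w})
      have hfw : f w = c := hc w (mem_insert_of_mem (mem_singleton_self w))
      exact G.retains_of_forall_ne hnadj (hfu.trans hfw.symm) (hfu ▸ hTc)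

/-- If every vertex independently picks a uniformly random color from a set of `q` colors,
and `u, w` are distinct non-adjacent vertices (of degree at most `Δ`) that are both neighbors
of a vertex `v` (of degree at most `Δ`), then the probability that `u` and `w` pick the same
color, both retain it (no neighbor picked the same color), and no other neighbor of `v`
picks that color, is at least `(1/q)·((q−1)/q)^{3Δ}`. -/
theorem stmt5 {V : Type*} [Fintype V] [DecidableEq V] (G : SimpleGraph V)
    [DecidableRel G.Adj] (Δ q : ℕ) [NeZero q] (u w v : V)
    (huw : u ≠ w) (hnadj : ¬ G.Adj u w)
    (hu : u ∈ G.neighborFinset v) (hw : w ∈ G.neighborFinset v)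
    (hdu : G.degree u ≤ Δ) (hdw : G.degree w ≤ Δ) (hdv : G.degree v ≤ Δ) :
    ENNReal.ofReal ((1 / (q : ℝ)) * (((q : ℝ) - 1) / q) ^ (3 * Δ)) ≤
      (PMF.uniformOfFintype (V → Fin q)).toOuterMeasure
        {f : V → Fin q | f u = f w ∧
          (∀ x ∈ G.neighborFinset u, f x ≠ f u) ∧
          (∀ x ∈ G.neighborFinset w, f x ≠ f w) ∧
          (∀ x ∈ G.neighborFinset v, x ≠ u → x ≠ w → f x ≠ f u)} :=
  stmt5_general G Δ q u w v hnadj hdu hdw hdv
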